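/- arXiv:2505.09840 — 4 statements merged into one kernel-verified Lean document; each statement's English description precedes it below -/
import Mathlib

section
/- For every real $C \ge 1$ there exists $\eta_0 \ge 1$ (depending only on $C$) such that for all $\eta \ge \eta_0$, all real numbers $\alpha, \beta, \xi$ with $0 < \alpha \le e^{-2\eta}$, $|\beta| \le C e^{-\eta}$, $|\xi| \le C e^{-\eta}$, and all $u \in \mathbb{C}$ with $|u| \le e^{\eta/2}$: the denominator $\sinh(\xi) u + \cosh(\xi)$ is nonzero, and $\left| \alpha \cdot \frac{\cosh(\xi) u + \sinh(\xi)}{\sinh(\xi) u + \cosh(\xi)} + \beta \right| < 1$. -/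
lemma my_sinh_le_mul_exp {x : ℝ} (_hx : 0 ≤ x) : Real.sinh x ≤ x * Real.exp x := by
  have h1 : Real.exp (-x) * Real.exp x = 1 := by rw [← Real.exp_add]; simp
  have h2 : 1 - 2*x ≤ Real.exp (-x) * Real.exp (-x) := by
    have h := Real.add_one_le_exp (-(2*x))
    rw [← Real.exp_add] at *
    calc 1 - 2*x = -(2*x) + 1 := by ring
      _ ≤ Real.exp (-(2*x)) := h
      _ = Real.exp (-x + -x) := by ring_nf
  rw [Real.sinh_eq]
  nlinarith [Real.exp_pos (-x), Real.exp_pos x]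

lemma my_cosh_le_exp_abs (x : ℝ) : Real.cosh x ≤ Real.exp |x| := by
  rw [Real.cosh_eq]
  have h1 : Real.exp x ≤ Real.exp |x| := Real.exp_le_exp.mpr (le_abs_self x)
  have h2 : Real.exp (-x) ≤ Real.exp |x| := Real.exp_le_exp.mpr (neg_le_abs x)
  linarith

theorem ifs_map_preimage_contains_large_ball (C : ℝ) (hC : 1 ≤ C) :
    ∃ η₀ : ℝ, 1 ≤ η₀ ∧ ∀ η : ℝ, η₀ ≤ η → ∀ α β ξ : ℝ,
      0 < α → α ≤ Real.exp (-2*η) → |β| ≤ C * Real.exp (-η) → |ξ| ≤ C * Real.exp (-η) →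
      ∀ u : ℂ, ‖u‖ ≤ Real.exp (η/2) →
        ((Real.sinh ξ : ℂ) * u + (Real.cosh ξ : ℂ) ≠ 0 ∧
          ‖(α : ℂ) * (((Real.cosh ξ : ℂ) * u + (Real.sinh ξ : ℂ)) /
            ((Real.sinh ξ : ℂ) * u + (Real.cosh ξ : ℂ))) + (β : ℂ)‖ < 1) := by
  set k : ℝ := 100 * C with hkdef
  have hk1 : 100 ≤ k := by nlinarith
  have hk0 : 0 < k := by linarith
  have hlogk : 1 ≤ Real.log k := by
    rw [Real.le_log_iff_exp_le hk0]
    have := Real.exp_one_lt_d9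
    linarith
  have heklog : Real.exp (Real.log k) = k := Real.exp_log hk0
  refine ⟨2 * Real.log k, by linarith, ?_⟩
  intro η hη α β ξ hα0 hα hβ hξ u hu
  have hη2 : 2 * Real.log k ≤ η := hη
  have hηpos : 0 < η := by linarith
  -- exponential bounds
  have hexpη : Real.exp (-η) ≤ 1 / k^2 := by
    have h : Real.exp (-η) ≤ Real.exp (-(2 * Real.log k)) := Real.exp_le_exp.mpr (by linarith)
    have he : Real.exp (-(2 * Real.log k)) = 1 / k^2 := by
      rw [Real.exp_neg, show (2:ℝ) * Real.log k = Real.log k + Real.log k by ring,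
        Real.exp_add, heklog]
      rw [one_div]; ring_nf
    linarith [h, he ▸ h]
  have hexpη2 : Real.exp (-(η/2)) ≤ 1 / k := by
    calc Real.exp (-(η/2)) ≤ Real.exp (-Real.log k) := Real.exp_le_exp.mpr (by linarith)
      _ = 1 / k := by rw [Real.exp_neg, heklog, one_div]
  have hexp3η2 : Real.exp (-(3*η/2)) ≤ 1 / k^3 := by
    have h : Real.exp (-(3*η/2)) ≤ Real.exp (-(3 * Real.log k)) := Real.exp_le_exp.mpr (by linarith)
    have he : Real.exp (-(3 * Real.log k)) = 1 / k^3 := by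
      rw [Real.exp_neg, show (3:ℝ) * Real.log k = Real.log k + (Real.log k + Real.log k) by ring,
        Real.exp_add, Real.exp_add, heklog]
      rw [one_div]; ring_nf
    linarith [he ▸ h]
  have hepos : (0:ℝ) < Real.exp (-η) := Real.exp_pos _
  have hCepos : (0:ℝ) < C * Real.exp (-η) := by positivity
  have hC0 : (0:ℝ) < C := by linarith
  have hCk : C * (1 / k^2) ≤ 1 / 10000 := by
    have h : C * (1/k^2) = 1/(10000*C) := by rw [hkdef]; field_simp; ring
    rw [h]
    apply div_le_div_of_nonneg_left (by norm_num) (by norm_num) ?_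
    nlinarith
  have hCe : C * Real.exp (-η) ≤ 1 / 10000 := by
    calc C * Real.exp (-η) ≤ C * (1/k^2) := by
          apply mul_le_mul_of_nonneg_left hexpη (by linarith)
      _ ≤ 1/10000 := hCk
  have hxi1 : |ξ| ≤ 1 := le_trans hξ (by linarith)
  -- sinh bound
  have hsinh : |Real.sinh ξ| ≤ 3 * (C * Real.exp (-η)) := by
    rw [Real.abs_sinh]
    calc Real.sinh |ξ| ≤ |ξ| * Real.exp |ξ| := my_sinh_le_mul_exp (abs_nonneg ξ)
      _ ≤ (C * Real.exp (-η)) * Real.exp 1 := by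
          apply mul_le_mul hξ (Real.exp_le_exp.mpr hxi1) (Real.exp_pos _).le hCepos.le
      _ ≤ 3 * (C * Real.exp (-η)) := by
          have := Real.exp_one_lt_d9
          nlinarith
  -- cosh bounds
  have hcosh1 : 1 ≤ Real.cosh ξ := Real.one_le_cosh ξ
  have hcosh3 : Real.cosh ξ ≤ 3 := by
    have h := my_cosh_le_exp_abs ξ
    have h2 : Real.exp |ξ| ≤ Real.exp 1 := Real.exp_le_exp.mpr hxi1
    have := Real.exp_one_lt_d9
    linarith
  have hupos : (0:ℝ) ≤ ‖u‖ := norm_nonneg u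
  have hu1 : (1:ℝ) ≤ Real.exp (η/2) := Real.one_le_exp (by linarith)
  -- abs of real casts
  have hsu : ‖(Real.sinh ξ : ℂ) * u‖ ≤ 3 / 100 := by
    rw [norm_mul, Complex.norm_real, Real.norm_eq_abs]
    calc |Real.sinh ξ| * ‖u‖ ≤ (3 * (C * Real.exp (-η))) * Real.exp (η/2) := by
          apply mul_le_mul hsinh hu (norm_nonneg u) (by positivity)
      _ = 3 * C * (Real.exp (-η) * Real.exp (η/2)) := by ring
      _ = 3 * C * Real.exp (-(η/2)) := by rw [← Real.exp_add]; congr 1; ring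
      _ ≤ 3 * C * (1/k) := by
          apply mul_le_mul_of_nonneg_left hexpη2 (by linarith)
      _ = 3 / 100 := by rw [hkdef]; field_simp
  -- denominator bound
  have habc : ‖(Real.cosh ξ : ℂ)‖ ≤
      ‖(Real.sinh ξ : ℂ) * u + (Real.cosh ξ : ℂ)‖ +
      ‖(Real.sinh ξ : ℂ) * u‖ := by
    have h := norm_add_le ((Real.sinh ξ : ℂ) * u + (Real.cosh ξ : ℂ))
      (-((Real.sinh ξ : ℂ) * u))
    simpa using h
  have hcoshabs : ‖(Real.cosh ξ : ℂ)‖ = Real.cosh ξ := by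
    rw [Complex.norm_real, Real.norm_eq_abs, abs_of_pos (by linarith)]
  have hden : (1:ℝ)/2 ≤ ‖(Real.sinh ξ : ℂ) * u + (Real.cosh ξ : ℂ)‖ := by
    rw [hcoshabs] at habc
    linarith
  have hdenne : (Real.sinh ξ : ℂ) * u + (Real.cosh ξ : ℂ) ≠ 0 := by
    intro h
    rw [h] at hden
    simp at hden
    linarith
  refine ⟨hdenne, ?_⟩
  -- numerator bound
  have hnum : ‖(Real.cosh ξ : ℂ) * u + (Real.sinh ξ : ℂ)‖ ≤ 4 * Real.exp (η/2) := by
    calc ‖(Real.cosh ξ : ℂ) * u + (Real.sinh ξ : ℂ)‖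
        ≤ ‖(Real.cosh ξ : ℂ) * u‖ + ‖(Real.sinh ξ : ℂ)‖ :=
          norm_add_le _ _
      _ ≤ 3 * Real.exp (η/2) + 1 := by
          rw [norm_mul, Complex.norm_real, Real.norm_eq_abs, Complex.norm_real, Real.norm_eq_abs]
          have h1 : |Real.cosh ξ| * ‖u‖ ≤ 3 * Real.exp (η/2) := by
            rw [abs_of_pos (by linarith : (0:ℝ) < Real.cosh ξ)]
            apply mul_le_mul hcosh3 hu hupos (by norm_num)
          have h2 : |Real.sinh ξ| ≤ 1 := by
            calc |Real.sinh ξ| ≤ 3 * (C * Real.exp (-η)) := hsinh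
              _ ≤ 3 * (1/10000) := by linarith
              _ ≤ 1 := by norm_num
          linarith
      _ ≤ 4 * Real.exp (η/2) := by linarith
  -- final estimate
  have key : ‖(α : ℂ) * (((Real.cosh ξ : ℂ) * u + (Real.sinh ξ : ℂ)) /
      ((Real.sinh ξ : ℂ) * u + (Real.cosh ξ : ℂ))) + (β : ℂ)‖ ≤
      α * (‖(Real.cosh ξ : ℂ) * u + (Real.sinh ξ : ℂ)‖ /
        ‖(Real.sinh ξ : ℂ) * u + (Real.cosh ξ : ℂ)‖) + |β| := by
    calc ‖_‖ ≤ ‖(α : ℂ) * (((Real.cosh ξ : ℂ) * u + (Real.sinh ξ : ℂ)) /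
          ((Real.sinh ξ : ℂ) * u + (Real.cosh ξ : ℂ)))‖ + ‖(β : ℂ)‖ :=
        norm_add_le _ _
      _ = _ := by
        rw [norm_mul, norm_div, Complex.norm_real, Real.norm_eq_abs, Complex.norm_real, Real.norm_eq_abs,
          abs_of_pos hα0]
  have hquot : ‖(Real.cosh ξ : ℂ) * u + (Real.sinh ξ : ℂ)‖ /
      ‖(Real.sinh ξ : ℂ) * u + (Real.cosh ξ : ℂ)‖ ≤ 8 * Real.exp (η/2) := by
    rw [div_le_iff₀ (by linarith)]
    calc ‖(Real.cosh ξ : ℂ) * u + (Real.sinh ξ : ℂ)‖ ≤ 4 * Real.exp (η/2) := hnum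
      _ = (8 * Real.exp (η/2)) * (1/2) := by ring
      _ ≤ (8 * Real.exp (η/2)) * ‖(Real.sinh ξ : ℂ) * u + (Real.cosh ξ : ℂ)‖ := by
          apply mul_le_mul_of_nonneg_left hden (by positivity)
  have hαquot : α * (‖(Real.cosh ξ : ℂ) * u + (Real.sinh ξ : ℂ)‖ /
      ‖(Real.sinh ξ : ℂ) * u + (Real.cosh ξ : ℂ)‖) ≤ 8 / k^3 := by
    calc α * _ ≤ Real.exp (-2*η) * (8 * Real.exp (η/2)) := by
          apply mul_le_mul hα hquot (by positivity) (Real.exp_pos _).le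
      _ = 8 * (Real.exp (-2*η) * Real.exp (η/2)) := by ring
      _ = 8 * Real.exp (-(3*η/2)) := by rw [← Real.exp_add]; congr 1; ring
      _ ≤ 8 * (1/k^3) := by
          apply mul_le_mul_of_nonneg_left hexp3η2 (by norm_num)
      _ = 8 / k^3 := by ring
  have hk3 : (8:ℝ) / k^3 ≤ 8 / 1000000 := by
    apply div_le_div_of_nonneg_left (by norm_num) (by norm_num) ?_
    calc (1000000:ℝ) = 100^3 := by norm_num
      _ ≤ k^3 := pow_le_pow_left₀ (by norm_num) hk1 3
  apply lt_of_le_of_lt key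
  linarith
end

section
/- For every real $C \ge 1$ there exists $\eta_0 \ge 1$ (depending only on $C$) such that for all $\eta \ge \eta_0$ and every positive integer $n$ the following holds. Suppose $f_1, \dots, f_n : \mathbb{C} \setminus \{\text{pole}\} \to \mathbb{C}$ are maps of the form $f_m(u) = \alpha_m \frac{\cosh(\xi_m) u + \sinh(\xi_m)}{\sinh(\xi_m) u + \cosh(\xi_m)} + \beta_m$ with real parameters satisfying $0 < \alpha_m \le e^{-2\eta}$, $|\beta_m| \le C e^{-\eta}$, $|\xi_m| \le C e^{-\eta}$ for each $m$. Then the composition $g = f_n \circ \cdots \circ f_1$ is well-defined and complex-differentiable at every $u$ with $|u| \le 1$, and $|g'(u)| \le (2 e^{-2\eta})^n \le 2^{-n}$ for all such $u$. -/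
-- single Möbius map facts
lemma moeb_step (a b x : ℝ) (ha : 0 < a) (hx : |x| ≤ 1/4) (v : ℂ) (hv : ‖v‖ ≤ 1) :
    ∃ e : ℂ,
      HasDerivAt (fun w : ℂ =>
        (a : ℂ) * (((Real.cosh x : ℂ) * w + (Real.sinh x : ℂ)) /
          ((Real.sinh x : ℂ) * w + (Real.cosh x : ℂ))) + (b : ℂ)) e v ∧
      ‖e‖ ≤ 2 * a ∧
      ‖((a : ℂ) * (((Real.cosh x : ℂ) * v + (Real.sinh x : ℂ)) /
          ((Real.sinh x : ℂ) * v + (Real.cosh x : ℂ))) + (b : ℂ))‖ ≤ 2 * a + |b| := by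
  set c : ℝ := Real.cosh x with hc
  set s : ℝ := Real.sinh x with hs
  set D : ℂ := (s : ℂ) * v + (c : ℂ) with hD
  set N : ℂ := (c : ℂ) * v + (s : ℂ) with hN
  have hcpos : 0 < c := Real.cosh_pos x
  have hcs : c - |s| = Real.exp (-|x|) := by
    rw [hc, hs, ← Real.cosh_abs, Real.abs_sinh, ← Real.cosh_sub_sinh]
  have hcs' : c + |s| = Real.exp |x| := by
    rw [hc, hs, ← Real.cosh_abs, Real.abs_sinh, ← Real.cosh_add_sinh]
  have habsx : Real.exp (-(1/4:ℝ)) ≤ Real.exp (-|x|) := by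
    apply Real.exp_le_exp.2; linarith
  have h34 : (3/4 : ℝ) ≤ Real.exp (-|x|) := by
    have := Real.add_one_le_exp (-(1/4:ℝ))
    linarith
  have hDlow : Real.exp (-|x|) ≤ ‖D‖ := by
    have h1 : ‖((c : ℂ))‖ ≤ ‖D‖ + ‖((s : ℂ) * v)‖ := by
      have h2 := norm_add_le D (-((s : ℂ) * v))
      have h3 : D + (-((s : ℂ) * v)) = (c : ℂ) := by rw [hD]; ring
      rw [h3] at h2
      simpa using h2
    have h4 : ‖((s : ℂ) * v)‖ ≤ |s| := by
      rw [norm_mul, Complex.norm_real, Real.norm_eq_abs]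
      nlinarith [norm_nonneg v, abs_nonneg s]
    rw [Complex.norm_real, Real.norm_eq_abs, abs_of_pos hcpos] at h1
    linarith
  have hDpos : (3/4 : ℝ) ≤ ‖D‖ := le_trans h34 hDlow
  have hD0 : D ≠ 0 := by
    intro h; rw [h] at hDpos; simp at hDpos; linarith
  have pyth : (c : ℂ) ^ 2 - (s : ℂ) ^ 2 = 1 := by
    have := Real.cosh_sq_sub_sinh_sq x
    rw [hc, hs]; push_cast; exact Complex.cosh_sq_sub_sinh_sq _
  -- derivative
  have h1 : HasDerivAt (fun w : ℂ => (c : ℂ) * w + (s : ℂ)) (c : ℂ) v := by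
    simpa using ((hasDerivAt_id v).const_mul (c : ℂ)).add_const (s : ℂ)
  have h2 : HasDerivAt (fun w : ℂ => (s : ℂ) * w + (c : ℂ)) (s : ℂ) v := by
    simpa using ((hasDerivAt_id v).const_mul (s : ℂ)).add_const (c : ℂ)
  have hdiv := h1.div h2 hD0
  have hf := (hdiv.const_mul (a : ℂ)).add_const (b : ℂ)
  refine ⟨(a : ℂ) / D ^ 2, ?_, ?_, ?_⟩
  · have key : (c:ℂ) * ((s:ℂ)*v + (c:ℂ)) - ((c:ℂ)*v + (s:ℂ)) * (s:ℂ) = 1 := by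
      linear_combination pyth
    refine hf.congr_deriv ?_
    rw [key, ← hD]
    ring
  · rw [norm_div, norm_pow, Complex.norm_real, Real.norm_eq_abs, abs_of_pos ha]
    have hsq : (9/16 : ℝ) ≤ ‖D‖ ^ 2 := by nlinarith
    have : a / ‖D‖ ^ 2 ≤ a / (9/16 : ℝ) := by
      apply div_le_div_of_nonneg_left (le_of_lt ha) (by norm_num) hsq
    linarith
  · have hNle : ‖N‖ ≤ Real.exp |x| := by
      calc ‖N‖ ≤ ‖((c:ℂ)*v)‖ + ‖((s:ℂ))‖ := norm_add_le _ _
        _ ≤ c + |s| := by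
            rw [norm_mul, Complex.norm_real, Real.norm_eq_abs, Complex.norm_real, Real.norm_eq_abs, abs_of_pos hcpos]
            nlinarith [norm_nonneg v]
        _ = Real.exp |x| := hcs'
    have hmob : ‖(N / D)‖ ≤ Real.exp (2 * |x|) := by
      rw [norm_div]
      have hDpos' : (0:ℝ) < ‖D‖ := by linarith
      rw [div_le_iff₀ hDpos']
      calc ‖N‖ ≤ Real.exp |x| := hNle
        _ = Real.exp (2*|x|) * Real.exp (-|x|) := by rw [← Real.exp_add]; ring_nf
        _ ≤ Real.exp (2*|x|) * ‖D‖ := by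
            apply mul_le_mul_of_nonneg_left hDlow (Real.exp_nonneg _)
    have hexp2 : Real.exp (2 * |x|) ≤ 2 := by
      have h5 : Real.exp (2 * |x|) ≤ Real.exp (1/2 : ℝ) := by
        apply Real.exp_le_exp.2; linarith
      have h6 : Real.exp (1/2 : ℝ) * Real.exp (1/2 : ℝ) = Real.exp 1 := by
        rw [← Real.exp_add]; norm_num
      have h7 := Real.exp_one_lt_d9
      nlinarith [Real.exp_pos (1/2 : ℝ)]
    calc ‖((a:ℂ) * (N/D) + (b:ℂ))‖
        ≤ ‖((a:ℂ) * (N/D))‖ + ‖((b:ℂ))‖ := norm_add_le _ _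
      _ ≤ a * 2 + |b| := by
          rw [norm_mul, Complex.norm_real, Real.norm_eq_abs, Complex.norm_real, Real.norm_eq_abs, abs_of_pos ha]
          have := le_trans hmob hexp2
          nlinarith [norm_nonneg (N/D)]
      _ ≤ 2 * a + |b| := by linarith

-- chain lemma
lemma chain_foldl (r : ℝ) (hr : 0 ≤ r) :
    ∀ (L : List (ℂ → ℂ)),
      (∀ f ∈ L, ∀ v : ℂ, ‖v‖ ≤ 1 →
        ∃ e, HasDerivAt f e v ∧ ‖e‖ ≤ r ∧ ‖(f v)‖ ≤ 1) →
      ∀ (g : ℂ → ℂ) (d : ℂ) (u : ℂ), HasDerivAt g d u → ‖(g u)‖ ≤ 1 →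
      ∃ d', HasDerivAt (L.foldl (fun acc fm => fm ∘ acc) g) d' u ∧
        ‖d'‖ ≤ r ^ L.length * ‖d‖ ∧
        ‖((L.foldl (fun acc fm => fm ∘ acc) g) u)‖ ≤ 1 := by
  intro L
  induction L with
  | nil =>
    intro _ g d u hg hgu
    exact ⟨d, hg, by simp, hgu⟩
  | cons f L ih =>
    intro hL g d u hg hgu
    obtain ⟨e, hfe, hele, hfv⟩ := hL f (List.mem_cons_self) (g u) hgu
    have hcomp : HasDerivAt (f ∘ g) (e * d) u := hfe.comp u hg
    have hfgu : ‖((f ∘ g) u)‖ ≤ 1 := hfv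
    obtain ⟨d', hd', hbound, hle⟩ :=
      ih (fun f' hf' => hL f' (List.mem_cons_of_mem _ hf')) (f ∘ g) (e * d) u hcomp hfgu
    refine ⟨d', hd', ?_, hle⟩
    calc ‖d'‖ ≤ r ^ L.length * ‖(e * d)‖ := hbound
      _ = r ^ L.length * (‖e‖ * ‖d‖) := by rw [norm_mul]
      _ ≤ r ^ L.length * (r * ‖d‖) := by
          apply mul_le_mul_of_nonneg_left _ (pow_nonneg hr _)
          exact mul_le_mul_of_nonneg_right hele (norm_nonneg d)
      _ = r ^ (f :: L).length * ‖d‖ := by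
          rw [List.length_cons, pow_succ]; ring

theorem ifs_word_maps_eventually_contracting (C : ℝ) (hC : 1 ≤ C) :
    ∃ η₀ : ℝ, 1 ≤ η₀ ∧ ∀ η : ℝ, η₀ ≤ η → ∀ n : ℕ, 1 ≤ n →
      ∀ α β ξ : Fin n → ℝ,
      (∀ m, 0 < α m) → (∀ m, α m ≤ Real.exp (-2*η)) →
      (∀ m, |β m| ≤ C * Real.exp (-η)) → (∀ m, |ξ m| ≤ C * Real.exp (-η)) →
      ∀ u : ℂ, ‖u‖ ≤ 1 →
        ∃ d : ℂ,
          HasDerivAt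
            ((List.ofFn (fun m : Fin n => fun v : ℂ =>
                (α m : ℂ) * (((Real.cosh (ξ m) : ℂ) * v + (Real.sinh (ξ m) : ℂ)) /
                  ((Real.sinh (ξ m) : ℂ) * v + (Real.cosh (ξ m) : ℂ))) + (β m : ℂ))).foldl
              (fun acc fm => fm ∘ acc) id) d u ∧
          ‖d‖ ≤ (2 * Real.exp (-2*η)) ^ n ∧
          (2 * Real.exp (-2*η)) ^ n ≤ (1/2 : ℝ) ^ n := by
  refine ⟨max 1 (Real.log (4*C)), le_max_left _ _, ?_⟩
  intro η hη n hn α β ξ hα hαe hβ hξ u hu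
  have hη1 : (1:ℝ) ≤ η := le_trans (le_max_left _ _) hη
  have hlog : Real.log (4*C) ≤ η := le_trans (le_max_right _ _) hη
  have h4C : (0:ℝ) < 4*C := by linarith
  have hexpη : 4*C ≤ Real.exp η := by
    calc 4*C = Real.exp (Real.log (4*C)) := (Real.exp_log h4C).symm
      _ ≤ Real.exp η := Real.exp_le_exp.2 hlog
  have hCe : C * Real.exp (-η) ≤ 1/4 := by
    have hrew : C * Real.exp (-η) = C / Real.exp η := by
      rw [Real.exp_neg]; ring
    rw [hrew, div_le_iff₀ (Real.exp_pos η)]; linarith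
  have he2 : Real.exp (-2*η) ≤ 1/4 := by
    have hE : Real.exp (-2*η) ≤ Real.exp (-2) := Real.exp_le_exp.2 (by linarith)
    have hm : Real.exp (-2) * Real.exp 2 = 1 := by rw [← Real.exp_add]; norm_num
    have h2 : (4:ℝ) ≤ Real.exp 2 := by
      have h6 : Real.exp 2 = Real.exp 1 * Real.exp 1 := by rw [← Real.exp_add]; norm_num
      have h7 := Real.exp_one_gt_d9
      nlinarith
    nlinarith [Real.exp_pos (-2)]
  set r : ℝ := 2 * Real.exp (-2*η) with hr
  have hr0 : 0 ≤ r := by positivity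
  have hgood : ∀ f ∈ List.ofFn (fun m : Fin n => fun v : ℂ =>
      (α m : ℂ) * (((Real.cosh (ξ m) : ℂ) * v + (Real.sinh (ξ m) : ℂ)) /
        ((Real.sinh (ξ m) : ℂ) * v + (Real.cosh (ξ m) : ℂ))) + (β m : ℂ)),
      ∀ v : ℂ, ‖v‖ ≤ 1 →
        ∃ e, HasDerivAt f e v ∧ ‖e‖ ≤ r ∧ ‖(f v)‖ ≤ 1 := by
    intro f hf v hv
    rw [List.mem_ofFn] at hf
    obtain ⟨m, rfl⟩ := hf
    obtain ⟨e, he, heb, hfv⟩ :=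
      moeb_step (α m) (β m) (ξ m) (hα m) (le_trans (hξ m) hCe) v hv
    refine ⟨e, he, ?_, ?_⟩
    · have := hαe m; rw [hr]; linarith
    · have h1 := hαe m
      have h2 := le_trans (hβ m) hCe
      calc ‖_‖ ≤ 2 * (α m) + |β m| := hfv
        _ ≤ 2 * (1/4) + 1/4 := by
            have := le_trans h1 he2; linarith
        _ ≤ 1 := by norm_num
  obtain ⟨d, hd, hdb, _⟩ := chain_foldl r hr0 _ hgood id 1 u (hasDerivAt_id u)
    (by simpa using hu)
  refine ⟨d, hd, ?_, ?_⟩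
  · simpa [List.length_ofFn] using hdb
  · apply pow_le_pow_left₀ hr0
    rw [hr]; linarith
end

section
/- For all real numbers $\eta \ge 1$ and $a, b, c \ge \eta$: $1 \le \frac{\cosh(a+b)\cosh(a+c) + \cosh(b+c)}{\sinh(a+b)\sinh(a+c)} \le 1 + 3 e^{-2\eta}$. Consequently, if $\delta \ge 0$ is the real number satisfying $\cosh(\delta) = \frac{\cosh(a+b)\cosh(a+c) + \cosh(b+c)}{\sinh(a+b)\sinh(a+c)}$, then $\delta \le 3 e^{-\eta}$. -/
open Real

lemma poly_core (P Q R : ℝ) (hP : 7.29 ≤ P) (hQ : 7.29 ≤ Q) (hR : 7.29 ≤ R) :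
    2*P^2*(Q+1)*(R+1) ≤ 3*(P*Q-1)*(P*R-1) := by
  nlinarith [mul_nonneg (mul_nonneg (by linarith : (0:ℝ) ≤ P - 7.29) (by linarith : (0:ℝ) ≤ Q - 7.29)) (by linarith : (0:ℝ) ≤ R - 7.29),
    mul_nonneg (by linarith : (0:ℝ) ≤ Q - 7.29) (by linarith : (0:ℝ) ≤ R - 7.29),
    mul_nonneg (by linarith : (0:ℝ) ≤ P - 7.29) (by linarith : (0:ℝ) ≤ Q - 7.29),
    mul_nonneg (by linarith : (0:ℝ) ≤ P - 7.29) (by linarith : (0:ℝ) ≤ R - 7.29),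
    mul_nonneg (mul_nonneg (mul_nonneg (by linarith : (0:ℝ) ≤ P - 7.29) (by linarith : (0:ℝ) ≤ P - 7.29)) (by linarith : (0:ℝ) ≤ Q - 7.29)) (by linarith : (0:ℝ) ≤ R - 7.29),
    mul_nonneg (mul_nonneg (by linarith : (0:ℝ) ≤ P - 7.29) (by linarith : (0:ℝ) ≤ P - 7.29)) (by linarith : (0:ℝ) ≤ Q - 7.29),
    mul_nonneg (mul_nonneg (by linarith : (0:ℝ) ≤ P - 7.29) (by linarith : (0:ℝ) ≤ P - 7.29)) (by linarith : (0:ℝ) ≤ R - 7.29),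
    sq_nonneg (P - 7.29)]

lemma key_ineq (η a b c : ℝ) (hη : 1 ≤ η)
    (ha : η ≤ a) (hb : η ≤ b) (hc : η ≤ c) :
    2 * Real.cosh b * Real.cosh c ≤
      3 * Real.exp (-2*η) * (Real.sinh (a+b) * Real.sinh (a+c)) := by
  have h1 : (1:ℝ) ≤ a := hη.trans ha
  have h2 : (1:ℝ) ≤ b := hη.trans hb
  have h3 : (1:ℝ) ≤ c := hη.trans hc
  have he1 : (2.7:ℝ) ≤ Real.exp 1 := by have := Real.exp_one_gt_d9; linarith
  have hu : (2.7:ℝ) ≤ Real.exp a := he1.trans (Real.exp_le_exp.2 h1)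
  have hv : (2.7:ℝ) ≤ Real.exp b := he1.trans (Real.exp_le_exp.2 h2)
  have hw : (2.7:ℝ) ≤ Real.exp c := he1.trans (Real.exp_le_exp.2 h3)
  have hE : Real.exp (-2*a) ≤ Real.exp (-2*η) := Real.exp_le_exp.2 (by linarith)
  have hsinhb : 0 < Real.sinh (a+b) := Real.sinh_pos_iff.2 (by linarith)
  have hsinhc : 0 < Real.sinh (a+c) := Real.sinh_pos_iff.2 (by linarith)
  have step : 2 * Real.cosh b * Real.cosh c ≤
      3 * Real.exp (-2*a) * (Real.sinh (a+b) * Real.sinh (a+c)) := by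
    rw [Real.cosh_eq, Real.cosh_eq, Real.sinh_eq, Real.sinh_eq]
    set u := Real.exp a with hudef
    set v := Real.exp b with hvdef
    set w := Real.exp c with hwdef
    have hu0 : 0 < u := Real.exp_pos a
    have hv0 : 0 < v := Real.exp_pos b
    have hw0 : 0 < w := Real.exp_pos c
    have hiv : Real.exp (-b) = 1/v := by rw [Real.exp_neg]; field_simp; rfl
    have hiw : Real.exp (-c) = 1/w := by rw [Real.exp_neg]; field_simp; rfl
    have hiab : Real.exp (-(a+b)) = 1/(u*v) := by
      rw [Real.exp_neg, Real.exp_add]; field_simp; rfl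
    have hiac : Real.exp (-(a+c)) = 1/(u*w) := by
      rw [Real.exp_neg, Real.exp_add]; field_simp; rfl
    have hab : Real.exp (a+b) = u*v := Real.exp_add a b
    have hac : Real.exp (a+c) = u*w := Real.exp_add a c
    have hE2 : Real.exp (-2*a) = 1/(u*u) := by
      rw [show (-2*a) = -(a+a) by ring, Real.exp_neg, Real.exp_add]; field_simp; rfl
    rw [hiv, hiw, hiab, hiac, hab, hac, hE2]
    have hL : 2 * ((v + 1/v)/2) * ((w + 1/w)/2)
        = ((v*v+1)*(w*w+1))/(2*(v*w)) := by field_simp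
    have hR : 3 * (1/(u*u)) * ((u*v - 1/(u*v))/2 * ((u*w - 1/(u*w))/2))
        = (3*((u*u)*(v*v)-1)*((u*u)*(w*w)-1))/(4*(u*u)*(u*u)*(v*w)) := by
      field_simp; ring
    rw [hL, hR, div_le_div_iff₀ (by positivity) (by positivity)]
    have hP : (7.29:ℝ) ≤ u*u := by
      have := mul_le_mul hu hu (by norm_num) (by linarith)
      norm_num at this ⊢; linarith
    have hQ : (7.29:ℝ) ≤ v*v := by
      have := mul_le_mul hv hv (by norm_num) (by linarith)
      norm_num at this ⊢; linarith
    have hRR : (7.29:ℝ) ≤ w*w := by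
      have := mul_le_mul hw hw (by norm_num) (by linarith)
      norm_num at this ⊢; linarith
    have hcore := poly_core (u*u) (v*v) (w*w) hP hQ hRR
    calc (v*v+1)*(w*w+1) * (4*(u*u)*(u*u)*(v*w))
        = (2*(u*u)^2*((v*v)+1)*((w*w)+1)) * (2*(v*w)) := by ring
      _ ≤ (3*((u*u)*(v*v)-1)*((u*u)*(w*w)-1)) * (2*(v*w)) := by
          exact mul_le_mul_of_nonneg_right hcore (by positivity)
      _ = 3*((u*u)*(v*v)-1)*((u*u)*(w*w)-1) * (2*(v*w)) := by ring
  calc 2 * Real.cosh b * Real.cosh c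
      ≤ 3 * Real.exp (-2*a) * (Real.sinh (a+b) * Real.sinh (a+c)) := step
    _ ≤ 3 * Real.exp (-2*η) * (Real.sinh (a+b) * Real.sinh (a+c)) := by
        apply mul_le_mul_of_nonneg_right (by linarith) (by positivity)

theorem hexagon_intercostal_estimate (η a b c : ℝ) (hη : 1 ≤ η)
    (ha : η ≤ a) (hb : η ≤ b) (hc : η ≤ c) :
    (1 ≤ (Real.cosh (a+b) * Real.cosh (a+c) + Real.cosh (b+c)) /
        (Real.sinh (a+b) * Real.sinh (a+c)) ∧
      (Real.cosh (a+b) * Real.cosh (a+c) + Real.cosh (b+c)) /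
        (Real.sinh (a+b) * Real.sinh (a+c)) ≤ 1 + 3 * Real.exp (-2*η)) ∧
    ∀ δ : ℝ, 0 ≤ δ →
      Real.cosh δ = (Real.cosh (a+b) * Real.cosh (a+c) + Real.cosh (b+c)) /
        (Real.sinh (a+b) * Real.sinh (a+c)) →
      δ ≤ 3 * Real.exp (-η) := by
  have h1 : (1:ℝ) ≤ a := hη.trans ha
  have h2 : (1:ℝ) ≤ b := hη.trans hb
  have h3 : (1:ℝ) ≤ c := hη.trans hc
  have hsb : 0 < Real.sinh (a+b) := Real.sinh_pos_iff.2 (by linarith)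
  have hsc : 0 < Real.sinh (a+c) := Real.sinh_pos_iff.2 (by linarith)
  have hD : 0 < Real.sinh (a+b) * Real.sinh (a+c) := mul_pos hsb hsc
  have hid : Real.cosh (a+b) * Real.cosh (a+c) + Real.cosh (b+c)
      - Real.sinh (a+b) * Real.sinh (a+c) = 2 * Real.cosh b * Real.cosh c := by
    have e1 : Real.cosh ((a+b) - (a+c)) =
        Real.cosh (a+b) * Real.cosh (a+c) - Real.sinh (a+b) * Real.sinh (a+c) :=
      Real.cosh_sub _ _
    have e2 : ((a+b) - (a+c)) = b - c := by ring
    rw [e2] at e1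
    have e3 : Real.cosh (b-c) = Real.cosh b * Real.cosh c - Real.sinh b * Real.sinh c :=
      Real.cosh_sub _ _
    have e4 : Real.cosh (b+c) = Real.cosh b * Real.cosh c + Real.sinh b * Real.sinh c :=
      Real.cosh_add _ _
    linarith
  have hkey := key_ineq η a b c hη ha hb hc
  have hcoshbc : (0:ℝ) < 2 * Real.cosh b * Real.cosh c := by positivity
  have hlow : 1 ≤ (Real.cosh (a+b) * Real.cosh (a+c) + Real.cosh (b+c)) /
      (Real.sinh (a+b) * Real.sinh (a+c)) := by
    rw [le_div_iff₀ hD]; linarith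
  have hhigh : (Real.cosh (a+b) * Real.cosh (a+c) + Real.cosh (b+c)) /
      (Real.sinh (a+b) * Real.sinh (a+c)) ≤ 1 + 3 * Real.exp (-2*η) := by
    rw [div_le_iff₀ hD]; nlinarith
  refine ⟨⟨hlow, hhigh⟩, ?_⟩
  intro δ hδ0 hδ
  have hcosh : Real.cosh δ ≤ 1 + 3 * Real.exp (-2*η) := hδ ▸ hhigh
  have hsinh : δ ≤ Real.sinh δ := Real.self_le_sinh_iff.2 hδ0
  have hsq : Real.cosh δ ^ 2 = Real.sinh δ ^ 2 + 1 := Real.cosh_sq δ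
  have hcpos : 0 < Real.cosh δ := Real.cosh_pos δ
  have hδ2 : δ^2 ≤ (1 + 3 * Real.exp (-2*η))^2 - 1 := by
    nlinarith [Real.one_le_cosh δ]
  set t := Real.exp (-2*η) with htdef
  have ht0 : 0 < t := Real.exp_pos _
  have ht : t ≤ 1/3 := by
    have hmono : Real.exp (-2*η) ≤ Real.exp (-2) := Real.exp_le_exp.2 (by linarith)
    have h2' : Real.exp (-2) ≤ 1/3 := by
      rw [Real.exp_neg]
      have he1 : (2.7:ℝ) ≤ Real.exp 1 := by have := Real.exp_one_gt_d9; linarith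
      have he2 : (3:ℝ) ≤ Real.exp 2 := by
        have : Real.exp 2 = Real.exp 1 * Real.exp 1 := by
          rw [← Real.exp_add]; norm_num
        nlinarith
      rw [inv_le_comm₀ (by positivity) (by norm_num)]
      linarith
    exact hmono.trans h2'
  have hsq3 : (3 * Real.exp (-η))^2 = 9 * t := by
    rw [htdef, show (-2*η) = (-η) + (-η) by ring, Real.exp_add]; ring
  have hδ2' : δ^2 ≤ (3 * Real.exp (-η))^2 := by
    rw [hsq3]; nlinarith
  nlinarith [Real.exp_pos (-η)]
end

section
/- Let $s \in \mathbb{C}$ and let $x, y, \delta, \eta$ be real numbers with $\eta \ge 1$, $\eta \le y \le x \le y + \delta$, $\delta \ge 0$, and $|s| \cdot \delta \le 1$. Then $\left| \frac{e^{-s x}}{1 - e^{-x}} - e^{-s y} \right| \le 6 \left( |s| \delta + e^{-\eta} \right) e^{|\mathrm{Re}(s)| \, x}$. -/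
theorem cycle_expansion_term_comparison (s : ℂ) (x y δ η : ℝ)
    (hη : 1 ≤ η) (hy : η ≤ y) (hxy : y ≤ x) (hx : x ≤ y + δ) (hδ : 0 ≤ δ)
    (hsδ : ‖s‖ * δ ≤ 1) :
    ‖Complex.exp (-s * (x : ℂ)) / (1 - Complex.exp (-(x : ℂ)))
        - Complex.exp (-s * (y : ℂ))‖
      ≤ 6 * (‖s‖ * δ + Real.exp (-η)) * Real.exp (|s.re| * x) := by
  have hx1 : (1:ℝ) ≤ x := hη.trans (hy.trans hxy)
  have hy1 : (1:ℝ) ≤ y := hη.trans hy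
  set r := Real.exp (-x) with hrdef
  have hr0 : 0 < r := Real.exp_pos _
  have hrη : r ≤ Real.exp (-η) := Real.exp_le_exp.mpr (by linarith)
  have hre1 : r ≤ Real.exp (-1) := Real.exp_le_exp.mpr (by linarith)
  have he1 : Real.exp (-1) < 1/2 := by
    have h := Real.exp_one_gt_d9
    rw [Real.exp_neg]
    rw [inv_lt_iff_one_lt_mul₀ (Real.exp_pos 1)]
    nlinarith
  have hr12 : r < 1/2 := lt_of_le_of_lt hre1 he1
  have he : Complex.exp (-(x:ℂ)) = (r : ℂ) := by
    rw [hrdef, Complex.ofReal_exp, Complex.ofReal_neg]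
  have hne : (1 : ℂ) - (r:ℂ) ≠ 0 := by
    have h : ((1 - r : ℝ) : ℂ) ≠ 0 := by
      exact_mod_cast ne_of_gt (by linarith : (0:ℝ) < 1 - r)
    simpa using h
  set C := Complex.exp (-s * (x:ℂ)) with hC
  set B := Complex.exp (-s * (y:ℂ)) with hB
  set A := C / (1 - Complex.exp (-(x:ℂ))) with hA
  have hE : 0 < Real.exp (|s.re| * x) := Real.exp_pos _
  have habsC : ‖C‖ ≤ Real.exp (|s.re| * x) := by
    rw [hC, Complex.norm_exp]
    apply Real.exp_le_exp.mpr
    have : (-s * (x:ℂ)).re = -s.re * x := by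
      simp [Complex.mul_re]
    rw [this]
    exact mul_le_mul_of_nonneg_right (neg_le_abs s.re) (by linarith)
  have habsB : ‖B‖ ≤ Real.exp (|s.re| * x) := by
    rw [hB, Complex.norm_exp]
    apply Real.exp_le_exp.mpr
    have : (-s * (y:ℂ)).re = -s.re * y := by
      simp [Complex.mul_re]
    rw [this]
    calc -s.re * y ≤ |s.re| * y :=
          mul_le_mul_of_nonneg_right (neg_le_abs s.re) (by linarith)
      _ ≤ |s.re| * x := mul_le_mul_of_nonneg_left hxy (abs_nonneg _)
  -- Term 1
  have h1 : A - C = C * ((r / (1 - r) : ℝ) : ℂ) := by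
    rw [hA, he]
    push_cast
    field_simp
    ring
  have hT1 : ‖A - C‖ ≤ 2 * Real.exp (-η) * Real.exp (|s.re| * x) := by
    rw [h1, norm_mul, Complex.norm_real, Real.norm_eq_abs,
      abs_of_nonneg (div_nonneg hr0.le (by linarith) : (0:ℝ) ≤ r / (1 - r))]
    have hq : r / (1 - r) ≤ 2 * Real.exp (-η) := by
      rw [div_le_iff₀ (by linarith)]
      nlinarith [Real.exp_pos (-η)]
    calc ‖C‖ * (r / (1 - r))
        ≤ Real.exp (|s.re| * x) * (2 * Real.exp (-η)) :=
          mul_le_mul habsC hq (div_nonneg hr0.le (by linarith)) (le_of_lt hE)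
      _ = 2 * Real.exp (-η) * Real.exp (|s.re| * x) := by ring
  -- Term 2
  have hz : ‖-s * ((x:ℂ) - (y:ℂ))‖ = ‖s‖ * (x - y) := by
    have h : ((x:ℂ) - (y:ℂ)) = ((x - y : ℝ) : ℂ) := by push_cast; ring
    rw [h, norm_mul, norm_neg, Complex.norm_real, Real.norm_eq_abs,
      abs_of_nonneg (by linarith : (0:ℝ) ≤ x - y)]
  have hz1 : ‖-s * ((x:ℂ) - (y:ℂ))‖ ≤ 1 := by
    rw [hz]
    calc ‖s‖ * (x - y) ≤ ‖s‖ * δ :=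
          mul_le_mul_of_nonneg_left (by linarith) (norm_nonneg s)
      _ ≤ 1 := hsδ
  have h2 : C - B = B * (Complex.exp (-s * ((x:ℂ) - (y:ℂ))) - 1) := by
    have har : (-s * (y:ℂ)) + (-s * ((x:ℂ) - (y:ℂ))) = -s * (x:ℂ) := by ring
    rw [hC, hB, mul_sub, mul_one, ← Complex.exp_add, har]
  have hT2 : ‖C - B‖
      ≤ 2 * (‖s‖ * δ) * Real.exp (|s.re| * x) := by
    rw [h2, norm_mul]
    have hb := Complex.norm_exp_sub_one_le hz1
    rw [hz] at hb
    have hb2 : ‖Complex.exp (-s * ((x:ℂ) - (y:ℂ))) - 1‖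
        ≤ 2 * (‖s‖ * δ) := by
      calc ‖Complex.exp (-s * ((x:ℂ) - (y:ℂ))) - 1‖
          ≤ 2 * (‖s‖ * (x - y)) := hb
        _ ≤ 2 * (‖s‖ * δ) := by
            nlinarith [norm_nonneg s]
    calc ‖B‖ * ‖Complex.exp (-s * ((x:ℂ) - (y:ℂ))) - 1‖
        ≤ Real.exp (|s.re| * x) * (2 * (‖s‖ * δ)) :=
          mul_le_mul habsB hb2 (norm_nonneg _) (le_of_lt hE)
      _ = 2 * (‖s‖ * δ) * Real.exp (|s.re| * x) := by ring
  have tri : ‖A - B‖ ≤ ‖A - C‖ + ‖C - B‖ :=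
    norm_sub_le_norm_sub_add_norm_sub A C B
  have hsd0 : 0 ≤ ‖s‖ * δ := mul_nonneg (norm_nonneg s) hδ
  have hexpη : 0 < Real.exp (-η) := Real.exp_pos _
  calc ‖A - B‖
      ≤ ‖A - C‖ + ‖C - B‖ := tri
    _ ≤ 2 * Real.exp (-η) * Real.exp (|s.re| * x)
        + 2 * (‖s‖ * δ) * Real.exp (|s.re| * x) := add_le_add hT1 hT2
    _ ≤ 6 * (‖s‖ * δ + Real.exp (-η)) * Real.exp (|s.re| * x) := by
        nlinarith
end
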